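/- arXiv:0911.1513 — 9 statements merged into one kernel-verified Lean document; each statement's English description precedes it below -/
import Mathlib

section
/- If f : (0,∞) → (0,∞) satisfies (1-z)·f(x) = f(f(xz)·(1-z)/z) for all x > 0 and 0 < z < 1, then f(x) ≤ x for all x > 0. -/
theorem stmt1 (f : ℝ → ℝ) (hpos : ∀ x : ℝ, 0 < x → 0 < f x)
    (heq : ∀ x : ℝ, 0 < x → ∀ z : ℝ, 0 < z → z < 1 →
      (1 - z) * f x = f (f (x * z) * ((1 - z) / z))) :
    ∀ x : ℝ, 0 < x → f x ≤ x := by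
  intro x hx
  by_contra! hlt
  have hfx : 0 < f x := hpos x hx
  -- With `f x * (1 - z) = x`, the equation at the point `x / z` reads `(1 - z) * f (x / z) = f (x / z)`,
  -- impossible for `0 < z` since `f (x / z) > 0`.
  obtain ⟨z, hz⟩ : ∃ z, z = 1 - x / f x := ⟨_, rfl⟩
  have hz0 : 0 < z := hz ▸ sub_pos.2 ((div_lt_one hfx).2 hlt)
  have hz1 : z < 1 := hz ▸ sub_lt_self 1 (div_pos hx hfx)
  have hy : 0 < x / z := div_pos hx hz0
  have harg : f x * ((1 - z) / z) = x / z := by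
    rw [hz, sub_sub_cancel, mul_div_assoc', mul_div_cancel₀ x hfx.ne']
  have hfixed : (1 - z) * f (x / z) = f (x / z) := by
    simpa only [div_mul_cancel₀ x hz0.ne', harg] using heq (x / z) hy z hz0 hz1
  nlinarith [hpos _ hy]
end

section
/- If f : (0,∞) → (0,∞) satisfies (1-z)·f(x) = f(f(xz)·(1-z)/z) for all x > 0 and 0 < z < 1, then the function x ↦ f(x)/x is monotonically non-increasing on (0,∞). -/
/-!
Substituting `x = u t`, `z = 1/t` with `t > 1` turns the equation into
`(t - 1) f(u t) = t f((t - 1) f(u))`. If `f w > w` for some `w`, the choice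
`t = f(w) / (f(w) - w)` makes `(t - 1) f(w) = w t`, and the identity collapses to
`f(w t) = 0`; hence `f(w) ≤ w` everywhere. Applied to `w = (t - 1) f(x)` with `t = y / x`
this gives `(t - 1) f(y) ≤ t (t - 1) f(x)`, i.e. `f(y) / y ≤ f(x) / x`.
-/

section

variable {f : ℝ → ℝ}

lemma sub_one_mul_map_mul (heq : ∀ x : ℝ, 0 < x → ∀ z : ℝ, 0 < z → z < 1 →
      (1 - z) * f x = f (f (x * z) * ((1 - z) / z)))
    {u : ℝ} (hu : 0 < u) {t : ℝ} (ht : 1 < t) :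
    (t - 1) * f (u * t) = t * f ((t - 1) * f u) := by
  have ht0 : 0 < t := by linarith
  have h := heq (u * t) (by positivity) t⁻¹ (by positivity) (inv_lt_one_of_one_lt₀ ht)
  rw [mul_inv_cancel_right₀ ht0.ne', show (1 - t⁻¹) / t⁻¹ = t - 1 by field_simp,
    mul_comm (f u)] at h
  rw [← h]
  field_simp

lemma map_le_self (hpos : ∀ x : ℝ, 0 < x → 0 < f x)
    (heq : ∀ x : ℝ, 0 < x → ∀ z : ℝ, 0 < z → z < 1 →
      (1 - z) * f x = f (f (x * z) * ((1 - z) / z)))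
    {w : ℝ} (hw : 0 < w) : f w ≤ w := by
  by_contra! hlt
  have hd : 0 < f w - w := by linarith
  set t := f w / (f w - w)
  have ht : 1 < t := (one_lt_div hd).mpr (by linarith)
  have hfix : (t - 1) * f w = w * t := by
    simp only [t]
    field_simp
    ring
  have h := sub_one_mul_map_mul heq hw ht
  rw [hfix] at h
  have : 0 < f (w * t) := hpos _ (by positivity)
  linarith

end

theorem stmt2 (f : ℝ → ℝ) (hpos : ∀ x : ℝ, 0 < x → 0 < f x)
    (heq : ∀ x : ℝ, 0 < x → ∀ z : ℝ, 0 < z → z < 1 →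
      (1 - z) * f x = f (f (x * z) * ((1 - z) / z))) :
    ∀ x y : ℝ, 0 < x → 0 < y → x ≤ y → f y / y ≤ f x / x := by
  intro x y hx hy hxy
  rcases hxy.eq_or_lt with rfl | hlt
  · exact le_rfl
  set t := y / x
  have ht : 1 < t := (one_lt_div hx).mpr hlt
  have hyt : x * t = y := mul_div_cancel₀ y hx.ne'
  have hid := sub_one_mul_map_mul heq hx ht
  have hbound := map_le_self hpos heq (mul_pos (sub_pos.mpr ht) (hpos x hx))
  rw [hyt] at hid
  have hfy : f y ≤ t * f x := by
    refine le_of_mul_le_mul_left ?_ (sub_pos.mpr ht)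
    calc (t - 1) * f y = t * f ((t - 1) * f x) := hid
      _ ≤ t * ((t - 1) * f x) := by gcongr
      _ = (t - 1) * (t * f x) := by ring
  rw [div_le_div_iff₀ hy hx]
  calc f y * x ≤ t * f x * x := by gcongr
    _ = f x * y := by rw [← hyt]; ring
end

section
/- If f : (0,∞) → (0,∞) satisfies (1-z)·f(x) = f(f(xz)·(1-z)/z) for all x > 0 and 0 < z < 1, and f(u₀) = u₀ for some u₀ > 0, then f(x) = x for all x > 0. -/
/-!
Put `g x = f x / x`. Substituting `x = a + b`, `z = a / (a + b)` turns the equation into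
`b / (a + b) * f (a + b) = f (f a * (b / a))`. If `f a > a`, choosing `b` with
`f a * (b / a) = a + b` makes the right side exceed the left, so `f a ≤ a`, i.e. `g ≤ 1`.
Applying `f w ≤ w` to the right side then shows that `g` is antitone, and at a fixed point `u`
the identity reads `g (w + u) = g w`, so `g (n * u) = 1` for all `n ≥ 1`.
Antitonicity gives `g x ≥ g (n * u) = 1` once `n * u > x`.
-/

open Set

def SolvesFunEq (f : ℝ → ℝ) : Prop :=
  ∀ x : ℝ, 0 < x → ∀ z : ℝ, 0 < z → z < 1 → (1 - z) * f x = f (f (x * z) * ((1 - z) / z))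

namespace SolvesFunEq

variable {f : ℝ → ℝ}

theorem add_eq (heq : SolvesFunEq f) {a b : ℝ} (ha : 0 < a) (hb : 0 < b) :
    b / (a + b) * f (a + b) = f (f a * (b / a)) := by
  have hab : 0 < a + b := by linarith
  have h := heq (a + b) hab (a / (a + b)) (by positivity) (by rw [div_lt_one hab]; linarith)
  have hx : (a + b) * (a / (a + b)) = a := by field_simp
  have hz : 1 - a / (a + b) = b / (a + b) := by field_simp; ring
  have hq : b / (a + b) / (a / (a + b)) = b / a := by field_simp
  rwa [hx, hz, hq] at h

theorem le_self (hpos : ∀ x, 0 < x → 0 < f x) (heq : SolvesFunEq f) {a : ℝ} (ha : 0 < a) :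
    f a ≤ a := by
  by_contra! h
  set b := a ^ 2 / (f a - a)
  have hb : 0 < b := div_pos (by positivity) (by linarith)
  have hfix : f a * (b / a) = a + b := by
    simp only [b]
    field_simp [(by linarith : f a - a ≠ 0)]
    ring
  have key := heq.add_eq ha hb
  rw [hfix] at key
  have hlt : b / (a + b) < 1 := by rw [div_lt_one (by linarith)]; linarith
  nlinarith [hpos (a + b) (by linarith)]

theorem antitoneOn_div_self (hpos : ∀ x, 0 < x → 0 < f x) (heq : SolvesFunEq f) :
    AntitoneOn (fun x => f x / x) (Ioi 0) := by
  intro a (ha : 0 < a) c (hc : 0 < c) hac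
  obtain rfl | hac := hac.eq_or_lt
  · rfl
  obtain ⟨b, hb, rfl⟩ : ∃ b, 0 < b ∧ c = a + b := ⟨c - a, by linarith, by ring⟩
  have key : b / (a + b) * f (a + b) ≤ f a * (b / a) :=
    heq.add_eq ha hb ▸ heq.le_self hpos (mul_pos (hpos a ha) (div_pos hb ha))
  calc f (a + b) / (a + b) = b / (a + b) * f (a + b) / b := by field_simp
    _ ≤ f a * (b / a) / b := by gcongr
    _ = f a / a := by field_simp

theorem div_self_add_fixedPoint (heq : SolvesFunEq f) {u w : ℝ} (hu : 0 < u) (hfix : f u = u)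
    (hw : 0 < w) : f (w + u) / (w + u) = f w / w := by
  have key := heq.add_eq hu hw
  rw [hfix, mul_div_cancel₀ w hu.ne'] at key
  rw [← key, add_comm]
  field_simp

theorem div_self_natCast_mul_fixedPoint (heq : SolvesFunEq f) {u : ℝ} (hu : 0 < u)
    (hfix : f u = u) (n : ℕ) : f ((n + 1) * u) / ((n + 1) * u) = 1 := by
  induction n with
  | zero => simp [hfix, hu.ne']
  | succ n ih =>
    push_cast
    rw [show ((n : ℝ) + 1 + 1) * u = (n + 1) * u + u by ring,
      heq.div_self_add_fixedPoint hu hfix (by positivity), ih]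

end SolvesFunEq

theorem stmt3 (f : ℝ → ℝ) (hpos : ∀ x : ℝ, 0 < x → 0 < f x)
    (heq : ∀ x : ℝ, 0 < x → ∀ z : ℝ, 0 < z → z < 1 →
      (1 - z) * f x = f (f (x * z) * ((1 - z) / z)))
    (u₀ : ℝ) (hu₀ : 0 < u₀) (hfix : f u₀ = u₀) :
    ∀ x : ℝ, 0 < x → f x = x := by
  have heq : SolvesFunEq f := heq
  intro x hx
  obtain ⟨n, hn⟩ := exists_nat_gt (x / u₀)
  have hxn : x ≤ (n + 1) * u₀ := by
    rw [div_lt_iff₀ hu₀] at hn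
    nlinarith
  have hge : 1 ≤ f x / x :=
    heq.div_self_natCast_mul_fixedPoint hu₀ hfix n ▸
      heq.antitoneOn_div_self hpos hx (by positivity : (0 : ℝ) < (n + 1) * u₀) hxn
  exact le_antisymm (heq.le_self hpos hx) ((one_le_div hx).mp hge)
end

section
/- Every function f : (0,∞) → (0,∞) satisfying (1-z)·f(x) = f(f(xz)·(1-z)/z) for all x > 0 and 0 < z < 1 is of the form f(x) = x/(Cx+1) for some constant C ≥ 0. -/
/-!
Put `g x = x / f x`. Substituting `x = s (f s + t) / f s` and `z = f s / (f s + t)` into the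
equation gives `f (s + g s * t) = f t * (f s + t) / t`, which says exactly that `g` solves the
Gołąb–Schinzel equation `g (s + g s * t) = g s * g t` on `(0, ∞)`. A positive solution is `≥ 1`
and monotone; if it takes the value `1` it is constantly `1`, and otherwise it is strictly
increasing, so comparing `g (s + g s * t) = g (t + g t * s)` forces `s + g s * t = t + g t * s`,
i.e. `g x = C * x + 1` with `C = g 1 - 1`.
-/

open Set

def GolabSchinzelOn (g : ℝ → ℝ) : Prop :=
  ∀ s t, 0 < s → 0 < t → g (s + g s * t) = g s * g t

namespace GolabSchinzelOn

variable {g : ℝ → ℝ}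

theorem one_le (h : GolabSchinzelOn g) (hg : ∀ s, 0 < s → 0 < g s) {s : ℝ} (hs : 0 < s) :
    1 ≤ g s := by
  by_contra! hlt
  -- `t` is the fixed point of `t ↦ s + g s * t`, so `g t = g s * g t`.
  set t := s / (1 - g s)
  have ht : 0 < t := div_pos hs (by linarith)
  have hfix : s + g s * t = t := by
    simp only [t]
    field_simp [(by linarith : (1 - g s) ≠ 0)]
    ring
  have hgt := h s t hs ht
  rw [hfix] at hgt
  nlinarith [hg t ht]

theorem eq_mul_of_lt (h : GolabSchinzelOn g) (hg : ∀ s, 0 < s → 0 < g s) {s u : ℝ}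
    (hs : 0 < s) (hsu : s < u) : g u = g s * g ((u - s) / g s) := by
  have hgs := hg s hs
  have := h s ((u - s) / g s) hs (div_pos (by linarith) hgs)
  rwa [mul_div_cancel₀ _ hgs.ne', add_sub_cancel] at this

theorem monotoneOn (h : GolabSchinzelOn g) (hg : ∀ s, 0 < s → 0 < g s) :
    MonotoneOn g (Ioi 0) := by
  refine monotoneOn_iff_forall_lt.2 fun s hs u _ hsu => ?_
  have hs : (0 : ℝ) < s := hs
  rw [h.eq_mul_of_lt hg hs hsu]
  exact le_mul_of_one_le_right (hg s hs).le
    (h.one_le hg (div_pos (by linarith) (hg s hs)))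

theorem strictMonoOn (h : GolabSchinzelOn g) (hg : ∀ s, 0 < s → 0 < g s)
    (hg1 : ∀ s, 0 < s → 1 < g s) : StrictMonoOn g (Ioi 0) := by
  intro s hs u _ hsu
  have hs : (0 : ℝ) < s := hs
  rw [h.eq_mul_of_lt hg hs hsu]
  exact lt_mul_of_one_lt_right (hg s hs) (hg1 _ (div_pos (by linarith) (hg s hs)))

theorem eq_one_of_eq_one (h : GolabSchinzelOn g) (hg : ∀ s, 0 < s → 0 < g s) {s₀ : ℝ}
    (hs₀ : 0 < s₀) (hgs₀ : g s₀ = 1) {x : ℝ} (hx : 0 < x) : g x = 1 := by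
  have hmul : ∀ n : ℕ, g ((n + 1) * s₀) = 1 := by
    intro n
    induction n with
    | zero => simpa using hgs₀
    | succ n ih =>
      have := h s₀ ((n + 1) * s₀) hs₀ (by positivity)
      rw [hgs₀, one_mul, one_mul, ih] at this
      rwa [show ((n + 1 : ℕ) + 1 : ℝ) * s₀ = s₀ + (n + 1) * s₀ by push_cast; ring]
  obtain ⟨n, hn⟩ := exists_nat_ge (x / s₀)
  have hxn : x ≤ (n + 1) * s₀ := by
    rw [div_le_iff₀ hs₀] at hn
    nlinarith
  refine le_antisymm ?_ (h.one_le hg hx)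
  calc g x ≤ g ((n + 1) * s₀) :=
        h.monotoneOn hg hx (show (0 : ℝ) < (n + 1) * s₀ by positivity) hxn
    _ = 1 := hmul n

theorem exists_eq_mul_add_one (h : GolabSchinzelOn g) (hg : ∀ s, 0 < s → 0 < g s) :
    ∃ C : ℝ, 0 ≤ C ∧ ∀ x, 0 < x → g x = C * x + 1 := by
  by_cases hone : ∃ s₀, 0 < s₀ ∧ g s₀ = 1
  · obtain ⟨s₀, hs₀, hgs₀⟩ := hone
    exact ⟨0, le_rfl, fun x hx => by rw [h.eq_one_of_eq_one hg hs₀ hgs₀ hx]; ring⟩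
  push Not at hone
  have hg1 : ∀ s, 0 < s → 1 < g s := fun s hs => (h.one_le hg hs).lt_of_ne (hone s hs).symm
  refine ⟨g 1 - 1, by linarith [hg1 1 one_pos], fun x hx => ?_⟩
  have harg : x + g x * 1 = 1 + g 1 * x :=
    (h.strictMonoOn hg hg1).injOn (show 0 < x + g x * 1 by linarith [hg x hx])
      (show 0 < 1 + g 1 * x by nlinarith [hg 1 one_pos])
      (by rw [h x 1 hx one_pos, h 1 x one_pos hx, mul_comm])
  linarith

end GolabSchinzelOn

theorem apply_add_div_mul_eq {f : ℝ → ℝ} (hpos : ∀ x : ℝ, 0 < x → 0 < f x)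
    (heq : ∀ x : ℝ, 0 < x → ∀ z : ℝ, 0 < z → z < 1 →
      (1 - z) * f x = f (f (x * z) * ((1 - z) / z)))
    {s t : ℝ} (hs : 0 < s) (ht : 0 < t) :
    f (s + s / f s * t) = f t * (f s + t) / t := by
  have hfs := hpos s hs
  have hfst : 0 < f s + t := by linarith
  have h := heq (s * (f s + t) / f s) (by positivity) (f s / (f s + t)) (by positivity)
    ((div_lt_one hfst).2 (by linarith))
  have hx : s * (f s + t) / f s * (f s / (f s + t)) = s := by field_simp
  have hz : 1 - f s / (f s + t) = t / (f s + t) := by field_simp; ring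
  have hy : f s * (t / (f s + t) / (f s / (f s + t))) = t := by field_simp
  have harg : s * (f s + t) / f s = s + s / f s * t := by field_simp
  rw [hx, hz, hy, harg] at h
  field_simp at h ⊢
  linarith

theorem golabSchinzelOn_div_self {f : ℝ → ℝ} (hpos : ∀ x : ℝ, 0 < x → 0 < f x)
    (heq : ∀ x : ℝ, 0 < x → ∀ z : ℝ, 0 < z → z < 1 →
      (1 - z) * f x = f (f (x * z) * ((1 - z) / z))) :
    GolabSchinzelOn fun s => s / f s := by
  intro s t hs ht
  have hfs := hpos s hs
  have hft := hpos t ht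
  dsimp only
  rw [apply_add_div_mul_eq hpos heq hs ht]
  field_simp

theorem stmt4 (f : ℝ → ℝ) (hpos : ∀ x : ℝ, 0 < x → 0 < f x)
    (heq : ∀ x : ℝ, 0 < x → ∀ z : ℝ, 0 < z → z < 1 →
      (1 - z) * f x = f (f (x * z) * ((1 - z) / z))) :
    ∃ C : ℝ, 0 ≤ C ∧ ∀ x : ℝ, 0 < x → f x = x / (C * x + 1) := by
  obtain ⟨C, hC, hg⟩ := (golabSchinzelOn_div_self hpos heq).exists_eq_mul_add_one
    fun s hs => div_pos hs (hpos s hs)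
  refine ⟨C, hC, fun x hx => ?_⟩
  have hfx := hpos x hx
  rw [← hg x hx]
  field_simp
end

section
/- If f : (0,∞) → (0,∞) satisfies (1-z)·f(x) = f(f(xz)·(1-z)/z) for all x > 0, 0 < z < 1, and f(x) < x for all x > 0, then f(u)/u · f(w)/w = f(x)/x where x = uw/f(u) + u, for all u, w > 0. -/
/- Substituting z = u / x, where x = u w / f u + u, the functional equation reads
(1 - u / x) f x = f (f u (x - u) / u) = f w, and 1 - u / x = u w / (x f u). -/

lemma functionalEq_at_div {f : ℝ → ℝ}
    (heq : ∀ x : ℝ, 0 < x → ∀ z : ℝ, 0 < z → z < 1 →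
      (1 - z) * f x = f (f (x * z) * ((1 - z) / z)))
    {u x : ℝ} (hu : 0 < u) (hux : u < x) :
    (x - u) / x * f x = f (f u * ((x - u) / u)) := by
  have hx : 0 < x := hu.trans hux
  have key := heq x hx (u / x) (by positivity) ((div_lt_one hx).mpr hux)
  rwa [mul_div_cancel₀ u hx.ne', one_sub_div hx.ne', div_div_div_cancel_right₀ hx.ne'] at key

theorem stmt5_general (f : ℝ → ℝ) (hpos : ∀ x : ℝ, 0 < x → 0 < f x)
    (heq : ∀ x : ℝ, 0 < x → ∀ z : ℝ, 0 < z → z < 1 →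
      (1 - z) * f x = f (f (x * z) * ((1 - z) / z))) :
    ∀ u w : ℝ, 0 < u → 0 < w →
      f u / u * (f w / w) = f (u * w / f u + u) / (u * w / f u + u) := by
  intro u w hu hw
  have hfu := hpos u hu
  obtain ⟨x, hx_def⟩ : ∃ x, x = u * w / f u + u := ⟨_, rfl⟩
  rw [← hx_def]
  have hxu : x - u = u * w / f u := by rw [hx_def]; ring
  have key := functionalEq_at_div heq hu (sub_pos.mp (by rw [hxu]; positivity))
  have harg : f u * ((x - u) / u) = w := by rw [hxu]; field_simp
  rw [harg, hxu] at key
  rw [← key]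
  field_simp

theorem stmt5 (f : ℝ → ℝ) (hpos : ∀ x : ℝ, 0 < x → 0 < f x)
    (heq : ∀ x : ℝ, 0 < x → ∀ z : ℝ, 0 < z → z < 1 →
      (1 - z) * f x = f (f (x * z) * ((1 - z) / z)))
    (hlt : ∀ x : ℝ, 0 < x → f x < x) :
    ∀ u w : ℝ, 0 < u → 0 < w →
      f u / u * (f w / w) = f (u * w / f u + u) / (u * w / f u + u) :=
  stmt5_general f hpos heq
end

section
/- Let Q be a positive definite quadratic form on ℝ^k with associated bilinear form B(x,y) = Q(x+y) - Q(x) - Q(y), and for a vector a with Q(a) ≠ 0 define φ_{a,Q}(x) = (a·Q(x) + x) / (Q(x)·Q(a) + B(x,a) + 1). Then for vectors a, b and any x such that all expressions are defined (denominators nonzero), φ_{a,Q}(φ_{b,Q}(x)) = φ_{a+b,Q}(x). -/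
/-!
For the Euclidean form, `φ_a` is the special conformal transformation: the conjugate of the
translation by `a` under the inversion `x ↦ x / Q x`, so the `φ_a` compose like translations.
Algebraically: with `e` the denominator of `φ_b` at `x` we get `Q (φ_b x) = Q x / e`, whence the
numerator and the denominator of `φ_a` at `φ_b x` are those of `φ_{a+b}` at `x` divided by `e`.
-/

/-- The basic map `φ_{a,Q}(x) = (a·Q(x) + x) / (Q(x)·Q(a) + B(x,a) + 1)`, where
`B(x,y) = Q(x+y) - Q(x) - Q(y)` is the bilinear form associated to `Q`. -/
noncomputable def phiAQ {k : ℕ} (Q : QuadraticForm ℝ (Fin k → ℝ)) (a x : Fin k → ℝ) :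
    Fin k → ℝ :=
  (Q x * Q a + (Q (x + a) - Q x - Q a) + 1)⁻¹ • (Q x • a + x)

open QuadraticMap

section

variable {R M : Type*} [CommRing R] [AddCommGroup M] [Module R M] (Q : QuadraticForm R M)

theorem map_add_eq_add_add_polar (x y : M) : Q (x + y) = Q x + Q y + polar Q x y := by
  rw [polar]
  abel

def specialConformalDenom (a x : M) : R :=
  Q x * Q a + polar Q x a + 1

theorem map_smul_add_self_eq_mul_specialConformalDenom (b x : M) :
    Q (Q x • b + x) = Q x * specialConformalDenom Q b x := by
  rw [specialConformalDenom, map_add_eq_add_add_polar, QuadraticMap.map_smul, polar_smul_left,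
    polar_comm, smul_eq_mul, smul_eq_mul]
  ring

end

section

variable {K M : Type*} [Field K] [AddCommGroup M] [Module K M] (Q : QuadraticForm K M)

noncomputable def specialConformal (a x : M) : M :=
  (specialConformalDenom Q a x)⁻¹ • (Q x • a + x)

theorem map_specialConformal (b x : M) :
    Q (specialConformal Q b x) = (specialConformalDenom Q b x)⁻¹ * Q x := by
  rw [specialConformal, QuadraticMap.map_smul, map_smul_add_self_eq_mul_specialConformalDenom,
    smul_eq_mul]
  have h := mul_self_mul_inv (specialConformalDenom Q b x)⁻¹
  rw [inv_inv] at h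
  linear_combination Q x * h

theorem polar_specialConformal (a b x : M) :
    polar Q (specialConformal Q b x) a =
      (specialConformalDenom Q b x)⁻¹ * (Q x * polar Q b a + polar Q x a) := by
  rw [specialConformal, polar_smul_left, polar_add_left, polar_smul_left, smul_eq_mul,
    smul_eq_mul]

theorem specialConformalDenom_specialConformal {a b x : M}
    (hb : specialConformalDenom Q b x ≠ 0) :
    specialConformalDenom Q a (specialConformal Q b x) =
      (specialConformalDenom Q b x)⁻¹ * specialConformalDenom Q (a + b) x := by
  rw [specialConformalDenom, map_specialConformal, polar_specialConformal]
  simp only [specialConformalDenom] at hb ⊢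
  rw [polar_add_right, map_add_eq_add_add_polar, polar_comm Q b a]
  field_simp
  ring

theorem map_smul_add_specialConformal (a b x : M) :
    Q (specialConformal Q b x) • a + specialConformal Q b x =
      (specialConformalDenom Q b x)⁻¹ • (Q x • (a + b) + x) := by
  rw [map_specialConformal, specialConformal]
  module

theorem specialConformal_specialConformal {a b x : M} (hb : specialConformalDenom Q b x ≠ 0) :
    specialConformal Q a (specialConformal Q b x) = specialConformal Q (a + b) x := by
  rw [specialConformal, specialConformalDenom_specialConformal Q hb,
    map_smul_add_specialConformal, specialConformal, smul_smul, mul_inv, inv_inv,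
    mul_right_comm, mul_inv_cancel₀ hb, one_mul]

end

theorem phiAQ_eq_specialConformal {k : ℕ} (Q : QuadraticForm ℝ (Fin k → ℝ)) :
    phiAQ Q = specialConformal Q :=
  rfl

theorem stmt6_general {k : ℕ} (Q : QuadraticForm ℝ (Fin k → ℝ))
    (a b x : Fin k → ℝ)
    (hb : Q x * Q b + (Q (x + b) - Q x - Q b) + 1 ≠ 0) :
    phiAQ Q a (phiAQ Q b x) = phiAQ Q (a + b) x := by
  rw [phiAQ_eq_specialConformal]
  exact specialConformal_specialConformal Q hb

theorem stmt6 {k : ℕ} (Q : QuadraticForm ℝ (Fin k → ℝ)) (hQ : Q.PosDef)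
    (a b x : Fin k → ℝ)
    (hb : Q x * Q b + (Q (x + b) - Q x - Q b) + 1 ≠ 0)
    (hab : Q x * Q (a + b) + (Q (x + (a + b)) - Q x - Q (a + b)) + 1 ≠ 0) :
    phiAQ Q a (phiAQ Q b x) = phiAQ Q (a + b) x :=
  stmt6_general Q a b x hb
end

section
/- Let Q be a positive definite quadratic form on ℝ^k with Q(a) = 1, and φ_{a,Q}(x) = (a·Q(x) + x)/Q(a + x). Then Q(φ_{a,Q}(x)) = Q(x)/Q(x + a) for all x with x ≠ -a. -/
namespace QuadraticMap

variable {R M : Type*} [AddCommGroup M]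

/-- Both sides expand to `Q x * (1 + Q x + polar Q a x)`. -/
theorem map_smul_add_of_map_eq_one [CommRing R] [Module R M] (Q : QuadraticMap R M R) {a : M}
    (ha : Q a = 1) (x : M) : Q (Q x • a + x) = Q x * Q (a + x) := by
  rw [QuadraticMap.map_add Q, QuadraticMap.map_add Q a, QuadraticMap.map_smul, polar_smul_left,
    ha, smul_eq_mul, smul_eq_mul]
  ring

/-- For `Q (a + x) = 0` both sides vanish, since `0⁻¹ = 0`. -/
theorem map_inv_smul_smul_add_of_map_eq_one [Field R] [Module R M] (Q : QuadraticMap R M R)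
    {a : M} (ha : Q a = 1) (x : M) :
    Q ((Q (a + x))⁻¹ • (Q x • a + x)) = Q x / Q (a + x) := by
  rw [QuadraticMap.map_smul, map_smul_add_of_map_eq_one Q ha, smul_eq_mul]
  rcases eq_or_ne (Q (a + x)) 0 with h | h
  · simp [h]
  · field_simp

end QuadraticMap

theorem stmt9_general {k : ℕ} (Q : QuadraticForm ℝ (Fin k → ℝ))
    (a : Fin k → ℝ) (ha : Q a = 1) (x : Fin k → ℝ) :
    Q ((Q (a + x))⁻¹ • (Q x • a + x)) = Q x / Q (x + a) := by
  rw [add_comm x a]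
  exact Q.map_inv_smul_smul_add_of_map_eq_one ha x

theorem stmt9 {k : ℕ} (Q : QuadraticForm ℝ (Fin k → ℝ)) (hQ : Q.PosDef)
    (a : Fin k → ℝ) (ha : Q a = 1) (x : Fin k → ℝ) (hx : x ≠ -a) :
    Q ((Q (a + x))⁻¹ • (Q x • a + x)) = Q x / Q (x + a) :=
  stmt9_general Q a ha x
end

section
/- If φ satisfies φ(φ(x)z)/z = φ(x(z+1))/(z+1) for all admissible x and z (the functional equation rewritten), then for every n ∈ ℕ, (1/n)·φ(nx) equals the n-fold iterate φ∘φ∘⋯∘φ(x). -/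
/-! Induction on `n`: the functional equation at `z = n` says that `x ↦ (1/n) φ(n x)` applied
after `φ` is `x ↦ (1/(n+1)) φ((n+1) x)`, so each rescaling is one more iterate of `φ`. -/

section

variable {K E : Type*} [DivisionRing K] [AddCommMonoid E] [Module K E]

theorem inv_natCast_smul_comp_natCast_smul_eq_iterate (φ : E → E)
    (hφ : ∀ m : ℕ, 0 < m → ∀ x : E,
      (m : K)⁻¹ • φ ((m : K) • φ x) = ((m : K) + 1)⁻¹ • φ (((m : K) + 1) • x)) :
    ∀ n : ℕ, 0 < n → ∀ x : E, (n : K)⁻¹ • φ ((n : K) • x) = φ^[n] x := by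
  intro n hn
  induction n, hn using Nat.le_induction with
  | base => simp
  | succ m hm ih =>
    intro x
    rw [Function.iterate_succ_apply, ← ih (φ x), hφ m hm x, Nat.cast_succ]

end

theorem stmt18 {k : ℕ} (φ : (Fin k → ℝ) → (Fin k → ℝ))
    (heq : ∀ (x : Fin k → ℝ) (z : ℝ), z ≠ 0 → z + 1 ≠ 0 →
      (1 / z) • φ (z • φ x) = (1 / (z + 1)) • φ ((z + 1) • x)) :
    ∀ n : ℕ, 0 < n → ∀ x : Fin k → ℝ,
      (1 / (n : ℝ)) • φ ((n : ℝ) • x) = φ^[n] x := by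
  simp only [one_div]
  refine inv_natCast_smul_comp_natCast_smul_eq_iterate φ fun m hm x => ?_
  simpa only [one_div] using heq x m (by positivity) (by positivity)
end

section
/- Let φ₁ : ℝ^k → ℝ^k be defined (where the denominator is nonzero) by (φ₁(x))ⱼ = (Σᵢ xᵢ² + k·xⱼ) / (Σᵢ (xᵢ+1)²). Then for every y ∈ ℝ^k with Σⱼ yⱼ = 0 and y in the image domain, the system: find z ∈ ℝ and x ∈ ℝ^k with Σᵢ xᵢ = 0 such that yⱼ = (z·Σᵢxᵢ² + k·xⱼ)/Σᵢ(zxᵢ+1)² for all j, has the solution z = 0, x = y; and if Σⱼ yⱼ = Y ≠ 0 and not all yⱼ equal, the solution (z, x) is unique with z determined by Σⱼ(kyⱼ - Y)² = kY·(k - zY)/z. -/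
/-!
Write `Y = ∑ yⱼ`, `s = ∑ yⱼ²` and `K = k`. If `(z, x)` solves the system and `D = ∑ (z xᵢ + 1)²`,
then `∑ xᵢ = 0` gives `D = z² ∑ xᵢ² + K`, and summing the equations `yⱼ D = z ∑ xᵢ² + K xⱼ` once
and after squaring gives `Y D = K z ∑ xᵢ²` and `s D = K ∑ xᵢ²`. Hence `z s = Y`, then
`D (K s - Y²) = K² s`, and finally `xⱼ = D (K yⱼ - Y) / K²`: the solution is forced to be
`z = Y / s`, `xⱼ = s (K yⱼ - Y) / (K s - Y²)`, and this candidate does solve the system as soon as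
`K s - Y² = (∑ⱼ (K yⱼ - Y)²) / K` is positive, i.e. as soon as the `yⱼ` are not all equal.
Through that same identity, `z s = Y` is the stated formula for `z`.
-/

open Finset

namespace HyperplaneRep

variable {ι : Type*} [Fintype ι]

/-- `y = (1/z) φ₁(z x)` with `x` on the hyperplane `∑ xᵢ = 0`. -/
def IsRep (y : ι → ℝ) (z : ℝ) (x : ι → ℝ) : Prop :=
  ∑ i, x i = 0 ∧
    ∀ j, y j = (z * ∑ i, x i ^ 2 + Fintype.card ι * x j) / ∑ i, (z * x i + 1) ^ 2

/-- By Lagrange's identity this is `∑_{i<j} (yᵢ - yⱼ)²`. -/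
def dispersion (y : ι → ℝ) : ℝ :=
  Fintype.card ι * ∑ j, y j ^ 2 - (∑ j, y j) ^ 2

noncomputable def repScale (y : ι → ℝ) : ℝ :=
  (∑ j, y j) / ∑ j, y j ^ 2

noncomputable def repPoint (y : ι → ℝ) : ι → ℝ :=
  fun j => (∑ i, y i ^ 2) * (Fintype.card ι * y j - ∑ i, y i) / dispersion y

lemma sum_mul_add_one_sq {x : ι → ℝ} (hx : ∑ i, x i = 0) (z : ℝ) :
    ∑ i, (z * x i + 1) ^ 2 = z ^ 2 * ∑ i, x i ^ 2 + Fintype.card ι := by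
  have hterm : ∀ i, (z * x i + 1) ^ 2 = z ^ 2 * x i ^ 2 + 2 * z * x i + 1 := fun i => by ring
  simp only [hterm, sum_add_distrib, ← mul_sum, hx, sum_const, card_univ, nsmul_eq_mul]
  ring

lemma sum_card_mul_sub_sum (y : ι → ℝ) :
    ∑ j, ((Fintype.card ι : ℝ) * y j - ∑ i, y i) = 0 := by
  simp [sum_sub_distrib, ← mul_sum]

lemma sum_sq_card_mul_sub_sum (y : ι → ℝ) :
    ∑ j, ((Fintype.card ι : ℝ) * y j - ∑ i, y i) ^ 2 = Fintype.card ι * dispersion y := by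
  have hterm : ∀ j, ((Fintype.card ι : ℝ) * y j - ∑ i, y i) ^ 2 =
      (Fintype.card ι : ℝ) ^ 2 * y j ^ 2 - 2 * (Fintype.card ι * ∑ i, y i) * y j
        + (∑ i, y i) ^ 2 := fun j => by ring
  simp only [hterm, sum_add_distrib, sum_sub_distrib, ← mul_sum, sum_const, card_univ,
    nsmul_eq_mul, dispersion]
  ring

lemma dispersion_pos {y : ι → ℝ} (hy : ∃ i j, y i ≠ y j) : 0 < dispersion y := by
  obtain ⟨a, b, hab⟩ := hy
  have hK : (0 : ℝ) < Fintype.card ι := Nat.cast_pos.2 (Fintype.card_pos_iff.2 ⟨a⟩)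
  have hsq : 0 < ∑ j, ((Fintype.card ι : ℝ) * y j - ∑ i, y i) ^ 2 := by
    apply sum_pos' (fun j _ => sq_nonneg _)
    by_contra! hall
    have hzero : ∀ j, (Fintype.card ι : ℝ) * y j - ∑ i, y i = 0 := fun j =>
      pow_eq_zero_iff two_ne_zero |>.1 <| le_antisymm (hall j (mem_univ j)) (sq_nonneg _)
    exact hab <| mul_left_cancel₀ hK.ne' <| by linear_combination hzero a - hzero b
  rw [sum_sq_card_mul_sub_sum] at hsq
  exact pos_of_mul_pos_right hsq hK.le

lemma card_pos_of_dispersion_pos {y : ι → ℝ} (hV : 0 < dispersion y) :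
    (0 : ℝ) < Fintype.card ι := by
  unfold dispersion at hV
  by_contra! hK
  rw [le_antisymm hK (Nat.cast_nonneg _)] at hV
  nlinarith [sq_nonneg (∑ i, y i)]

lemma sum_sq_pos_of_dispersion_pos {y : ι → ℝ} (hV : 0 < dispersion y) :
    0 < ∑ i, y i ^ 2 := by
  have hK := card_pos_of_dispersion_pos hV
  unfold dispersion at hV
  by_contra! hs
  nlinarith [sq_nonneg (∑ i, y i)]

lemma isRep_zero_self {y : ι → ℝ} (hy : ∑ i, y i = 0) : IsRep y 0 y := by
  refine ⟨hy, fun j => ?_⟩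
  have hK : (Fintype.card ι : ℝ) ≠ 0 := Nat.cast_ne_zero.2 (Fintype.card_pos_iff.2 ⟨j⟩).ne'
  rw [sum_mul_add_one_sq hy]
  field_simp
  ring

lemma isRep_repScale_repPoint {y : ι → ℝ} (hV : 0 < dispersion y) :
    IsRep y (repScale y) (repPoint y) := by
  have hs := sum_sq_pos_of_dispersion_pos hV
  have hsum : ∑ i, repPoint y i = 0 := by
    simp only [repPoint, ← sum_div, ← mul_sum, sum_card_mul_sub_sum, mul_zero, zero_div]
  have hsq : ∑ i, repPoint y i ^ 2 = Fintype.card ι * (∑ i, y i ^ 2) ^ 2 / dispersion y := by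
    simp only [repPoint, div_pow, mul_pow, ← sum_div, ← mul_sum, sum_sq_card_mul_sub_sum]
    field_simp
  refine ⟨hsum, fun j => ?_⟩
  have hK := card_pos_of_dispersion_pos hV
  have hVdef : dispersion y = Fintype.card ι * ∑ i, y i ^ 2 - (∑ i, y i) ^ 2 := rfl
  rw [sum_mul_add_one_sq hsum, hsq, repScale, repPoint, eq_div_iff (by positivity)]
  field_simp
  linear_combination y j * hVdef

section Uniqueness

variable {y : ι → ℝ} {z : ℝ} {x : ι → ℝ}

lemma IsRep.denom_pos [Nonempty ι] (h : IsRep y z x) : 0 < ∑ i, (z * x i + 1) ^ 2 := by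
  rw [sum_mul_add_one_sq h.1]
  positivity

lemma IsRep.mul_denom [Nonempty ι] (h : IsRep y z x) (j : ι) :
    y j * ∑ i, (z * x i + 1) ^ 2 = z * ∑ i, x i ^ 2 + Fintype.card ι * x j := by
  rw [h.2 j, div_mul_cancel₀ _ h.denom_pos.ne']

lemma IsRep.sum_mul_denom [Nonempty ι] (h : IsRep y z x) :
    (∑ j, y j) * ∑ i, (z * x i + 1) ^ 2 = Fintype.card ι * (z * ∑ i, x i ^ 2) := by
  simp only [sum_mul, h.mul_denom, sum_add_distrib, ← mul_sum, h.1, sum_const, card_univ,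
    nsmul_eq_mul]
  ring

lemma IsRep.sum_sq_mul_denom [Nonempty ι] (h : IsRep y z x) :
    (∑ j, y j ^ 2) * ∑ i, (z * x i + 1) ^ 2 = Fintype.card ι * ∑ i, x i ^ 2 := by
  set D := ∑ i, (z * x i + 1) ^ 2
  set t := ∑ i, x i ^ 2
  have hD : D = z ^ 2 * t + Fintype.card ι := sum_mul_add_one_sq h.1 z
  have hexpand : ∑ j, (y j * D) ^ 2 = Fintype.card ι * t * D := by
    have hterm : ∀ j, (y j * D) ^ 2 =
        z ^ 2 * t ^ 2 + 2 * z * t * Fintype.card ι * x j + (Fintype.card ι : ℝ) ^ 2 * x j ^ 2 :=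
      fun j => by rw [h.mul_denom]; ring
    simp only [hterm, sum_add_distrib, ← mul_sum, h.1, sum_const, card_univ, nsmul_eq_mul]
    rw [hD]
    ring
  apply mul_right_cancel₀ h.denom_pos.ne'
  simpa only [mul_pow, ← sum_mul, pow_two D, ← mul_assoc] using hexpand

lemma IsRep.mul_sum_sq [Nonempty ι] (h : IsRep y z x) : z * ∑ j, y j ^ 2 = ∑ j, y j :=
  mul_right_cancel₀ h.denom_pos.ne' <| by
    linear_combination z * h.sum_sq_mul_denom - h.sum_mul_denom

lemma IsRep.sum_sq_card_mul_sub_sum_eq [Nonempty ι] (h : IsRep y z x) (hY : ∑ j, y j ≠ 0) :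
    ∑ j, ((Fintype.card ι : ℝ) * y j - ∑ i, y i) ^ 2 =
      Fintype.card ι * (∑ i, y i) * (Fintype.card ι - z * ∑ i, y i) / z := by
  have hzs := h.mul_sum_sq
  rw [sum_sq_card_mul_sub_sum, dispersion, eq_div_iff (left_ne_zero_of_mul (hzs ▸ hY))]
  linear_combination (Fintype.card ι : ℝ) ^ 2 * hzs

lemma IsRep.eq_repScale_repPoint (h : IsRep y z x) (hV : 0 < dispersion y) :
    z = repScale y ∧ x = repPoint y := by
  unfold repScale repPoint
  set K := (Fintype.card ι : ℝ)
  set Y := ∑ i, y i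
  set s := ∑ i, y i ^ 2
  set D := ∑ i, (z * x i + 1) ^ 2
  set t := ∑ i, x i ^ 2
  have hVdef : dispersion y = K * s - Y ^ 2 := rfl
  have hK : 0 < K := card_pos_of_dispersion_pos hV
  have : Nonempty ι := Fintype.card_pos_iff.1 (Nat.cast_pos.1 hK)
  have hs : 0 < s := sum_sq_pos_of_dispersion_pos hV
  have hD : D = z ^ 2 * t + K := sum_mul_add_one_sq h.1 z
  have hsD : s * D = K * t := h.sum_sq_mul_denom
  have hzs : z * s = Y := h.mul_sum_sq
  have hDV : D * dispersion y = K ^ 2 * s := by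
    rw [hVdef]
    linear_combination s * K * hD - z ^ 2 * s * hsD + D * (z * s + Y) * hzs
  refine ⟨eq_div_of_mul_eq hs.ne' hzs, funext fun j => ?_⟩
  rw [eq_div_iff hV.ne']
  apply mul_left_cancel₀ (pow_ne_zero 2 hK.ne')
  linear_combination (-K * dispersion y) * h.mul_denom j + (K * y j - z * s) * hDV
    - K ^ 2 * s * hzs + dispersion y * z * hsD

end Uniqueness

end HyperplaneRep

open HyperplaneRep

theorem stmt19_general (k : ℕ) (y : Fin k → ℝ) :
    let P : ℝ → (Fin k → ℝ) → Prop := fun z x =>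
      (∑ i, x i = 0) ∧
      ∀ j, y j = (z * ∑ i, (x i) ^ 2 + (k : ℝ) * x j) / (∑ i, (z * x i + 1) ^ 2)
    ((∑ i, y i = 0) → P 0 y) ∧
    ((∑ i, y i ≠ 0) → (∃ i j, y i ≠ y j) →
      (∃! p : ℝ × (Fin k → ℝ), P p.1 p.2) ∧
      ∀ (z : ℝ) (x : Fin k → ℝ), P z x →
        ∑ j, ((k : ℝ) * y j - ∑ i, y i) ^ 2 =
          (k : ℝ) * (∑ i, y i) * ((k : ℝ) - z * ∑ i, y i) / z) := by
  intro P
  have hP : ∀ z x, P z x ↔ IsRep y z x := fun z x => by simp only [P, IsRep, Fintype.card_fin]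
  refine ⟨fun hy => (hP 0 y).2 (isRep_zero_self hy), fun hY hne => ?_⟩
  have hV := dispersion_pos hne
  refine ⟨⟨(repScale y, repPoint y), (hP _ _).2 (isRep_repScale_repPoint hV), ?_⟩, ?_⟩
  · rintro ⟨z, x⟩ hp
    obtain ⟨hz, hx⟩ := ((hP z x).1 hp).eq_repScale_repPoint hV
    exact Prod.ext hz hx
  · intro z x hp
    obtain ⟨i, -⟩ := hne
    have : Nonempty (Fin k) := ⟨i⟩
    simpa only [Fintype.card_fin] using ((hP z x).1 hp).sum_sq_card_mul_sub_sum_eq hY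

theorem stmt19 (k : ℕ) (hk : 1 ≤ k) (y : Fin k → ℝ) :
    let P : ℝ → (Fin k → ℝ) → Prop := fun z x =>
      (∑ i, x i = 0) ∧
      ∀ j, y j = (z * ∑ i, (x i) ^ 2 + (k : ℝ) * x j) / (∑ i, (z * x i + 1) ^ 2)
    ((∑ i, y i = 0) → P 0 y) ∧
    ((∑ i, y i ≠ 0) → (∃ i j, y i ≠ y j) →
      (∃! p : ℝ × (Fin k → ℝ), P p.1 p.2) ∧
      ∀ (z : ℝ) (x : Fin k → ℝ), P z x →
        ∑ j, ((k : ℝ) * y j - ∑ i, y i) ^ 2 =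
          (k : ℝ) * (∑ i, y i) * ((k : ℝ) - z * ∑ i, y i) / z) :=
  stmt19_general k y
end
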